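/- Let λ₁, λ₂, λ₃ be distinct real numbers, (x, y) ∈ ℤ² with |y| ≥ 2 and (x - λ₁y)(x - λ₂y)(x - λ₃y) = ±1. Let j minimize |x - λⱼy| and {j, k, l} = {1, 2, 3}, and set γ = ((x - λⱼy)/(x - λₖy)) · ((λₗ - λₖ)/(λⱼ - λₗ)). Then |γ| ≤ |λₖ - λⱼ|^{-2}|λₗ - λⱼ|^{-1} + |λₖ - λⱼ|^{-1}|λₗ - λⱼ|^{-2}. -/

import Mathlib

lemma perm3_aux (l : Fin 3 → ℝ) (x y : ℝ) (j k m : Fin 3)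
    (hjk : j ≠ k) (hjm : j ≠ m) (hkm : k ≠ m) :
    (x - l j * y) * (x - l k * y) * (x - l m * y)
      = (x - l 0 * y) * (x - l 1 * y) * (x - l 2 * y) := by
  have hju : j ∉ ({k, m} : Finset (Fin 3)) := by simp [hjk, hjm]
  have hku : k ∉ ({m} : Finset (Fin 3)) := by simp [hkm]
  have huniv : ({j, k, m} : Finset (Fin 3)) = Finset.univ := by
    apply Finset.eq_univ_of_card
    rw [Finset.card_insert_of_notMem hju, Finset.card_insert_of_notMem hku,
      Finset.card_singleton]
    simp
  have h1 : (x - l j * y) * (x - l k * y) * (x - l m * y)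
      = ∏ i ∈ ({j, k, m} : Finset (Fin 3)), (x - l i * y) := by
    rw [Finset.prod_insert hju, Finset.prod_insert hku, Finset.prod_singleton, mul_assoc]
  rw [h1, huniv, Fin.prod_univ_three]

theorem stmt_13 (l : Fin 3 → ℝ) (hinj : Function.Injective l)
    (x y : ℤ) (hy : 2 ≤ |y|)
    (hprod : (x - l 0 * y) * ((x : ℝ) - l 1 * y) * ((x : ℝ) - l 2 * y) = 1 ∨
             (x - l 0 * y) * ((x : ℝ) - l 1 * y) * ((x : ℝ) - l 2 * y) = -1)
    (j k m : Fin 3) (hjk : j ≠ k) (hjm : j ≠ m) (hkm : k ≠ m)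
    (hmin : ∀ i : Fin 3, |(x : ℝ) - l j * y| ≤ |(x : ℝ) - l i * y|)
    (γ : ℝ)
    (hγ : γ = (((x : ℝ) - l j * y) / ((x : ℝ) - l k * y)) *
              ((l m - l k) / (l j - l m))) :
    |γ| ≤ |l k - l j|⁻¹ ^ 2 * |l m - l j|⁻¹ + |l k - l j|⁻¹ * |l m - l j|⁻¹ ^ 2 := by
  have hK : (0:ℝ) < |l k - l j| :=
    abs_pos.2 (sub_ne_zero.2 fun h => hjk (hinj h).symm)
  have hM : (0:ℝ) < |l m - l j| :=
    abs_pos.2 (sub_ne_zero.2 fun h => hjm (hinj h).symm)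
  set A : ℝ := (x:ℝ) - l j * y with hA
  set B : ℝ := (x:ℝ) - l k * y with hB
  set C : ℝ := (x:ℝ) - l m * y with hC
  have hperm : A * B * C = (x - l 0 * y) * ((x : ℝ) - l 1 * y) * ((x : ℝ) - l 2 * y) :=
    perm3_aux l x y j k m hjk hjm hkm
  have habs : |A| * |B| * |C| = 1 := by
    rw [← abs_mul, ← abs_mul, hperm]
    rcases hprod with h | h <;> rw [h] <;> simp
  have hy' : (2:ℝ) ≤ |(y:ℝ)| := by
    rw [← Int.cast_abs]; exact_mod_cast hy
  -- |B| ≥ K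
  have hBA : B - A = (l j - l k) * y := by rw [hA, hB]; ring
  have hB2 : |l k - l j| * |(y:ℝ)| ≤ |A| + |B| := by
    have h1 : |B - A| ≤ |B| + |A| := abs_sub B A
    rw [hBA, abs_mul, abs_sub_comm (l j)] at h1
    linarith
  have hBK : |l k - l j| ≤ |B| := by
    have h2 := hmin k
    have h3 : |l k - l j| * 2 ≤ |l k - l j| * |(y:ℝ)| :=
      mul_le_mul_of_nonneg_left hy' hK.le
    simp only [← hA, ← hB] at h2
    linarith
  have hCA : C - A = (l j - l m) * y := by rw [hA, hC]; ring
  have hC2 : |l m - l j| * |(y:ℝ)| ≤ |A| + |C| := by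
    have h1 : |C - A| ≤ |C| + |A| := abs_sub C A
    rw [hCA, abs_mul, abs_sub_comm (l j)] at h1
    linarith
  have hCM : |l m - l j| ≤ |C| := by
    have h2 := hmin m
    have h3 : |l m - l j| * 2 ≤ |l m - l j| * |(y:ℝ)| :=
      mul_le_mul_of_nonneg_left hy' hM.le
    simp only [← hA, ← hC] at h2
    linarith
  have hBpos : 0 < |B| := lt_of_lt_of_le hK hBK
  have hCpos : 0 < |C| := lt_of_lt_of_le hM hCM
  have hAle : |A| * (|l k - l j| * |l m - l j|) ≤ 1 := by
    calc |A| * (|l k - l j| * |l m - l j|) ≤ |A| * (|B| * |C|) :=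
          mul_le_mul_of_nonneg_left (mul_le_mul hBK hCM hM.le hBpos.le) (abs_nonneg A)
      _ = 1 := by rw [← mul_assoc]; exact habs
  have htri : |l m - l k| ≤ |l m - l j| + |l k - l j| := by
    have := abs_sub_le (l m) (l j) (l k)
    rw [abs_sub_comm (l j) (l k)] at this
    exact this
  rw [hγ, abs_mul, abs_div, abs_div, abs_sub_comm (l j) (l m), div_mul_div_comm,
    div_le_iff₀ (by positivity)]
  set K := |l k - l j| with hKdef
  set M := |l m - l j| with hMdef
  have hrhs : (K⁻¹ ^ 2 * M⁻¹ + K⁻¹ * M⁻¹ ^ 2) * (|B| * M)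
      = (|B| * (M + K)) / (K ^ 2 * M) := by
    field_simp
  rw [hrhs, le_div_iff₀ (by positivity)]
  nlinarith [mul_le_mul_of_nonneg_right hAle (mul_nonneg (abs_nonneg (l m - l k)) hK.le),
    mul_le_mul_of_nonneg_right htri hK.le,
    mul_le_mul_of_nonneg_right hBK (add_nonneg hM.le hK.le),
    abs_nonneg (l m - l k), abs_nonneg A, hK, hM]
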